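/- The ε-perturbed chain satisfies detailed balance with respect to the weights ε^{‖x‖₁}: for every ε ∈ (0,1], every n ≥ 1, and all configurations x ≠ y in {0,1}^V, it holds that ε^{‖x‖₁} · P^ε(x,y) = ε^{‖y‖₁} · P^ε(y,x), where ‖x‖₁ = Σ_i x_i. -/
import Mathlib


open Finset

variable {V : Type*}

/-- Agreement of a configuration on an (unordered) edge. -/
def agreeFun (x : V → Bool) : Sym2 V → Bool :=
  Sym2.lift ⟨fun a b => x a == x b, fun a b => by show (x a == x b) = (x b == x a); cases x a <;> cases x b <;> rfl⟩

/-- The potential of the majority game: number of edges whose endpoints agree. -/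
def Phi [Fintype V] [DecidableEq V] (G : SimpleGraph V) [DecidableRel G.Adj]
    (x : V → Bool) : ℕ :=
  (G.edgeFinset.filter (fun e => agreeFun x e = true)).card

/-- Number of neighbors of `i` playing action `a` in configuration `x`. -/
def nCount [Fintype V] (G : SimpleGraph V) [DecidableRel G.Adj]
    (x : V → Bool) (i : V) (a : Bool) : ℕ :=
  ((G.neighborFinset i).filter (fun j => x j = a)).card

/-- Majority-game utility: number of neighbors agreeing with `i`. -/
def lamC [Fintype V] (G : SimpleGraph V) [DecidableRel G.Adj]
    (x : V → Bool) (i : V) : ℕ :=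
  ((G.neighborFinset i).filter (fun j => x j = x i)).card

/-- Minority-game utility: number of neighbors disagreeing with `i`. -/
def lamA [Fintype V] (G : SimpleGraph V) [DecidableRel G.Adj]
    (x : V → Bool) (i : V) : ℕ :=
  ((G.neighborFinset i).filter (fun j => x j ≠ x i)).card

/-- `x` is a Nash equilibrium of the minority game. -/
def MinorityNE [Fintype V] [DecidableEq V] (G : SimpleGraph V) [DecidableRel G.Adj]
    (x : V → Bool) : Prop :=
  ∀ (i : V) (a : Bool), lamA G (Function.update x i a) i ≤ lamA G x i

/-- A monotone crusade from `C`: starts at the indicator of `C`, ends at all-ones,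
and at each step one coordinate outside `C` is flipped from `0` to `1`. -/
def IsCrusade [DecidableEq V] (C : Finset V) (m : ℕ) (xs : ℕ → V → Bool) : Prop :=
  xs 0 = (fun v => decide (v ∈ C)) ∧ xs m = (fun _ => true) ∧
    ∀ k < m, ∃ i, i ∉ C ∧ xs k i = false ∧ xs (k + 1) = Function.update (xs k) i true

/-- `C` is a `Φ_c`-valid control set: there is a `Φ_c`-adapted monotone crusade from `C`. -/
def ValidControlSet [Fintype V] [DecidableEq V] (G : SimpleGraph V) [DecidableRel G.Adj]
    (C : Finset V) : Prop :=
  ∃ m xs, IsCrusade C m xs ∧ ∀ k < m, Phi G (xs k) ≤ Phi G (xs (k + 1))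

/-- `x ∈ Z`: reachable from the all-ones configuration by allowed down-flips. -/
def InZ [Fintype V] [DecidableEq V] (G : SimpleGraph V) [DecidableRel G.Adj]
    (x : V → Bool) : Prop :=
  ∃ m, ∃ ys : ℕ → V → Bool, ys 0 = (fun _ => true) ∧ ys m = x ∧
    ∀ k < m, ∃ i, ys k i = true ∧ nCount G (ys k) i false ≤ nCount G (ys k) i true ∧
      ys (k + 1) = Function.update (ys k) i false

/-- `‖x‖₁`: number of coordinates equal to `1`. -/
def norm1 [Fintype V] (x : V → Bool) : ℕ :=
  (Finset.univ.filter (fun v => x v = true)).card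

open Classical in
/-- The off-diagonal part of the transition kernel `P^ε`. -/
noncomputable def PkerOff [Fintype V] [DecidableEq V]
    (G : SimpleGraph V) [DecidableRel G.Adj] (eps : ℝ) (x y : V → Bool) : ℝ :=
  if ∃ i, x i = true ∧ nCount G x i false ≤ nCount G x i true ∧
      y = Function.update x i false then
    1 / (Fintype.card V : ℝ)
  else if ∃ i, x i = false ∧ nCount G x i false ≤ nCount G x i true ∧
      y = Function.update x i true then
    eps / (Fintype.card V : ℝ)
  else 0

open Classical in
/-- The transition kernel `P^ε`, with diagonal chosen so that rows sum to `1`. -/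
noncomputable def Pker [Fintype V] [DecidableEq V]
    (G : SimpleGraph V) [DecidableRel G.Adj] (eps : ℝ) (x y : V → Bool) : ℝ :=
  if x = y then
    1 - ∑ z ∈ Finset.univ.filter (fun z : V → Bool => z ≠ x), PkerOff G eps x z
  else PkerOff G eps x y

section Aux

variable [Fintype V] [DecidableEq V] (G : SimpleGraph V) [DecidableRel G.Adj]

lemma nCount_update_self (x : V → Bool) (i : V) (a b : Bool) :
    nCount G (Function.update x i a) i b = nCount G x i b := by
  unfold nCount
  congr 1
  apply Finset.filter_congr
  intro j hj
  have hji : j ≠ i := fun h => (G.notMem_neighborFinset_self i) (h ▸ hj)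
  simp [Function.update_of_ne hji]

/-- Down-flip condition. -/
def DownC (x y : V → Bool) : Prop :=
  ∃ i, x i = true ∧ nCount G x i false ≤ nCount G x i true ∧ y = Function.update x i false

/-- Up-flip condition. -/
def UpC (x y : V → Bool) : Prop :=
  ∃ i, x i = false ∧ nCount G x i false ≤ nCount G x i true ∧ y = Function.update x i true

lemma down_imp_up {x y : V → Bool} (h : DownC G x y) : UpC G y x := by
  obtain ⟨i, hxi, hc, hy⟩ := h
  refine ⟨i, by simp [hy], ?_, ?_⟩
  · have := nCount_update_self G x i false
    rw [hy, this false, this true]; exact hc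
  · funext j
    by_cases hji : j = i
    · subst hji; simp [hxi]
    · simp [hy, Function.update_of_ne hji]

lemma up_imp_down {x y : V → Bool} (h : UpC G x y) : DownC G y x := by
  obtain ⟨i, hxi, hc, hy⟩ := h
  refine ⟨i, by simp [hy], ?_, ?_⟩
  · have := nCount_update_self G x i true
    rw [hy, this false, this true]; exact hc
  · funext j
    by_cases hji : j = i
    · subst hji; simp [hxi]
    · simp [hy, Function.update_of_ne hji]

lemma not_down_and_up {x y : V → Bool} (hd : DownC G x y) (hu : UpC G x y) : False := by
  obtain ⟨i, hxi, _, hyi⟩ := hd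
  obtain ⟨j, hxj, _, hyj⟩ := hu
  by_cases hij : i = j
  · subst hij; rw [hxi] at hxj; exact Bool.true_eq_false.mp hxj
  · have h1 : y i = false := by simp [hyi]
    have h2 : y i = x i := by simp [hyj, Function.update_of_ne hij]
    rw [h2, hxi] at h1; exact Bool.true_eq_false.mp h1

lemma norm1_update_false {x : V → Bool} {i : V} (hxi : x i = true) :
    norm1 x = norm1 (Function.update x i false) + 1 := by
  unfold norm1
  have hset : Finset.univ.filter (fun v => Function.update x i false v = true)
      = (Finset.univ.filter (fun v => x v = true)).erase i := by
    ext v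
    by_cases hvi : v = i
    · subst hvi; simp
    · simp [Function.update_of_ne hvi, hvi]
  rw [hset, Finset.card_erase_of_mem (by simp [hxi])]
  have : 1 ≤ (Finset.univ.filter (fun v => x v = true)).card :=
    Finset.card_pos.mpr ⟨i, by simp [hxi]⟩
  omega

open Classical in
lemma pkerOff_eq (eps : ℝ) (x y : V → Bool) :
    PkerOff G eps x y = if DownC G x y then 1 / (Fintype.card V : ℝ)
      else if UpC G x y then eps / (Fintype.card V : ℝ) else 0 := by
  unfold PkerOff DownC UpC
  split_ifs <;> rfl

end Aux

/-- detailed balance of `P^ε` with respect to the weights `ε^{‖x‖₁}`. -/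
theorem pker_detailed_balance [Fintype V] [DecidableEq V]
    (G : SimpleGraph V) [DecidableRel G.Adj]
    (hn : 1 ≤ Fintype.card V) (eps : ℝ) (heps : 0 < eps) (heps1 : eps ≤ 1)
    (x y : V → Bool) (hxy : x ≠ y) :
    eps ^ norm1 x * Pker G eps x y = eps ^ norm1 y * Pker G eps y x := by
  classical
  have hyx : y ≠ x := hxy.symm
  rw [Pker, if_neg hxy, Pker, if_neg hyx, pkerOff_eq, pkerOff_eq]
  by_cases hd : DownC G x y
  · obtain ⟨i, hxi, _, hy⟩ := hd
    have hd' : DownC G x y := ⟨i, hxi, ‹_›, hy⟩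
    have hu : UpC G y x := down_imp_up G hd'
    have hnd : ¬ DownC G y x := fun h => not_down_and_up G hd' (down_imp_up G h)
    rw [if_pos hd', if_neg hnd, if_pos hu]
    have hn1 : norm1 x = norm1 y + 1 := by rw [hy]; exact norm1_update_false hxi
    rw [hn1, pow_succ]; ring
  · by_cases hu : UpC G x y
    · obtain ⟨i, hxi, _, hy⟩ := hu
      have hu' : UpC G x y := ⟨i, hxi, ‹_›, hy⟩
      have hd2 : DownC G y x := up_imp_down G hu'
      have hn1 : norm1 y = norm1 x + 1 := by
        have hyi : y i = true := by simp [hy]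
        have hx : x = Function.update y i false := by
          funext j
          by_cases hji : j = i
          · subst hji; simp [hxi]
          · simp [hy, Function.update_of_ne hji]
        rw [norm1_update_false hyi, ← hx]
      rw [if_neg hd, if_pos hu', if_pos hd2, hn1, pow_succ]; ring
    · have hnd2 : ¬ DownC G y x := fun h => hu (down_imp_up G h)
      have hnu2 : ¬ UpC G y x := fun h => hd (up_imp_down G h)
      rw [if_neg hd, if_neg hu, if_neg hnd2, if_neg hnu2]; ring
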